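/- arXiv:2104.00229 — 2 statements merged into one kernel-verified Lean document; each statement's English description precedes it below -/
import Mathlib

section
/- Discrete Gronwall lemma: Let a_k, b_k, c_k, d_k, γ_k, Δt_k be nonnegative real numbers (indexed by k = 0,...,m+1) satisfying a_{k+1} - a_k + b_{k+1}Δt_{k+1} + c_{k+1}Δt_{k+1} - c_k Δt_k ≤ a_k d_k Δt_k + γ_{k+1} Δt_{k+1} for all 0 ≤ k ≤ m. Then a_{m+1} + Σ_{k=0}^{m+1} b_k Δt_k ≤ exp(Σ_{k=0}^{m} d_k Δt_k) · (a_0 + (b_0 + c_0)Δt_0 + Σ_{k=1}^{m+1} γ_k Δt_k). -/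
/-!
With the energy `E n = a n + c n Δt n + ∑_{k ≤ n} b k Δt k`, the hypothesis rearranges to the linear
recurrence `E (k+1) ≤ (1 + d k Δt k) E k + γ (k+1) Δt (k+1)` (the extra terms `d k Δt k (c k Δt k + ∑ b)`
are nonnegative). The exponential form of the discrete Grönwall inequality bounds `E (m+1)`, and
`a (m+1) + ∑ b k Δt k ≤ E (m+1)`.
-/

open Finset

namespace DiscreteGronwallPaper

theorem sum_range_succ_eq_sum_Icc_one {M : Type*} [AddCommMonoid M] (f : ℕ → M) (n : ℕ) :
    ∑ k ∈ range n, f (k + 1) = ∑ k ∈ Icc 1 n, f k := by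
  rw [← Ico_add_one_right_eq_Icc, sum_Ico_eq_sum_range]
  simp only [add_tsub_cancel_right, add_comm 1]

theorem discrete_gronwall_range {u b c : ℕ → ℝ} {N : ℕ} (hu_nonneg : ∀ n, 0 ≤ u n)
    (hu : ∀ n < N, u (n + 1) ≤ (1 + c n) * u n + b n) (hc : ∀ n, 0 ≤ c n) (hb : ∀ n, 0 ≤ b n) :
    u N ≤ (u 0 + ∑ k ∈ range N, b k) * Real.exp (∑ i ∈ range N, c i) := by
  -- Freezing `u` from `N` on makes the recurrence hold for every `n`.
  have hv : ∀ n ≥ 0, u (min (n + 1) N) ≤ (1 + c n) * u (min n N) + b n := by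
    intro n _
    rcases lt_or_ge n N with hn | hn
    · rw [min_eq_left hn, min_eq_left hn.le]
      exact hu n hn
    · rw [min_eq_right hn, min_eq_right (by omega)]
      nlinarith [hu_nonneg N, hc n, hb n]
  simpa [Nat.Ico_zero_eq_range] using
    _root_.discrete_gronwall (u := fun n ↦ u (min n N)) (hu_nonneg _) hv (fun n _ ↦ hc n)
      (fun n _ ↦ hb n) (Nat.zero_le N)

def energy (a b c Δt : ℕ → ℝ) (n : ℕ) : ℝ :=
  a n + c n * Δt n + ∑ k ∈ range (n + 1), b k * Δt k

section

variable {a b c d γ Δt : ℕ → ℝ}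

theorem energy_nonneg (ha : ∀ k, 0 ≤ a k) (hb : ∀ k, 0 ≤ b k) (hc : ∀ k, 0 ≤ c k)
    (hΔt : ∀ k, 0 ≤ Δt k) (n : ℕ) : 0 ≤ energy a b c Δt n := by
  unfold energy
  have := sum_nonneg fun k (_ : k ∈ range (n + 1)) ↦ mul_nonneg (hb k) (hΔt k)
  have := mul_nonneg (hc n) (hΔt n)
  linarith [ha n]

theorem energy_succ_le (hb : ∀ k, 0 ≤ b k) (hc : ∀ k, 0 ≤ c k) (hd : ∀ k, 0 ≤ d k)
    (hΔt : ∀ k, 0 ≤ Δt k) {k : ℕ}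
    (h : a (k+1) - a k + b (k+1) * Δt (k+1) + c (k+1) * Δt (k+1) - c k * Δt k ≤
      a k * d k * Δt k + γ (k+1) * Δt (k+1)) :
    energy a b c Δt (k + 1) ≤ (1 + d k * Δt k) * energy a b c Δt k + γ (k + 1) * Δt (k + 1) := by
  have hB := sum_nonneg fun j (_ : j ∈ range (k + 1)) ↦ mul_nonneg (hb j) (hΔt j)
  have hextra : 0 ≤ d k * Δt k * (c k * Δt k + ∑ j ∈ range (k + 1), b j * Δt j) :=
    mul_nonneg (mul_nonneg (hd k) (hΔt k)) (add_nonneg (mul_nonneg (hc k) (hΔt k)) hB)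
  unfold energy
  rw [sum_range_succ _ (k + 1)]
  nlinarith

end

theorem discrete_gronwall (m : ℕ) (a b c d γ Δt : ℕ → ℝ)
    (ha : ∀ k, 0 ≤ a k) (hb : ∀ k, 0 ≤ b k) (hc : ∀ k, 0 ≤ c k)
    (hd : ∀ k, 0 ≤ d k) (hγ : ∀ k, 0 ≤ γ k) (hΔt : ∀ k, 0 ≤ Δt k)
    (h : ∀ k ≤ m,
      a (k+1) - a k + b (k+1) * Δt (k+1) + c (k+1) * Δt (k+1) - c k * Δt k ≤
        a k * d k * Δt k + γ (k+1) * Δt (k+1)) :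
    a (m+1) + ∑ k ∈ range (m+2), b k * Δt k ≤
      Real.exp (∑ k ∈ range (m+1), d k * Δt k) *
        (a 0 + (b 0 + c 0) * Δt 0 + ∑ k ∈ Icc 1 (m+1), γ k * Δt k) := by
  have hgronwall := discrete_gronwall_range (N := m + 1)
    (energy_nonneg ha hb hc hΔt)
    (fun k hk ↦ energy_succ_le hb hc hd hΔt (h k (Nat.le_of_lt_succ hk)))
    (fun k ↦ mul_nonneg (hd k) (hΔt k)) (fun k ↦ mul_nonneg (hγ (k + 1)) (hΔt (k + 1)))
  rw [sum_range_succ_eq_sum_Icc_one (fun k ↦ γ k * Δt k)] at hgronwall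
  have hcΔt := mul_nonneg (hc (m + 1)) (hΔt (m + 1))
  simp only [energy, zero_add, range_one, sum_singleton] at hgronwall
  linarith

end DiscreteGronwallPaper
end

section
/- Abstract BDF2 SAV energy stability: Let H be a real inner product space, α, ν, η, T, Δt > 0. Suppose u^{n+1}, u^n, u^{n-1}, b^{n+1}, b^n, b^{n-1} ∈ H, q^{n+1}, q^n, q^{n-1} ∈ ℝ, real numbers A, B, C, e > 0, and nonnegative reals Du, Db satisfy: (1/(2Δt))⟨3u^{n+1} - 4u^n + u^{n-1}, u^{n+1}⟩ + νDu² = e·q^{n+1}(αB - A), (α/(2Δt))⟨3b^{n+1} - 4b^n + b^{n-1}, b^{n+1}⟩ + αηDb² = -αe·q^{n+1}C, and (3q^{n+1} - 4q^n + q^{n-1})/(2Δt) = -(1/T)q^{n+1} + e(αC - αB + A). Then E^{n+1} - E^n ≤ -Δt(νDu² + ηαDb² + (1/T)|q^{n+1}|²), where E^n = (1/4)(‖u^n‖² + α‖b^n‖² + |q^n|²) + (1/4)(‖2u^n - u^{n-1}‖² + α‖2b^n - b^{n-1}‖² + |2q^n - q^{n-1}|²) and E^{n+1} is defined analogously with indices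 shifted up by one. -/
/-!
Summing the `u`-relation, `α` times the `b`-relation and `q^{n+1}` times the `q`-relation, the
nonlinear terms `e q^{n+1} (αB - A)`, `-α e q^{n+1} C` and `e q^{n+1} (αC - αB + A)` cancel, leaving
`⟪3u²-4u¹+u⁰, u²⟫ + α⟪3b²-4b¹+b⁰, b²⟫ + (3q²-4q¹+q⁰) q² = -2Δt (ν Du² + ηα Db² + |q²|²/T)`.
By the BDF2 identity
`2⟪3a - 4b + c, a⟫ = ‖a‖² + ‖2a - b‖² - ‖b‖² - ‖2b - c‖² + ‖a - 2b + c‖²`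
each pairing dominates twice the increment of its part of the energy, and the theorem follows.
-/

open scoped RealInnerProductSpace

section BDF2

variable {H : Type*} [NormedAddCommGroup H] [InnerProductSpace ℝ H]

theorem two_mul_inner_bdf2_eq (a b c : H) :
    2 * ⟪(3 : ℝ) • a - (4 : ℝ) • b + c, a⟫ =
      ‖a‖ ^ 2 + ‖(2 : ℝ) • a - b‖ ^ 2 - (‖b‖ ^ 2 + ‖(2 : ℝ) • b - c‖ ^ 2) +
        ‖a - (2 : ℝ) • b + c‖ ^ 2 := by
  simp only [← real_inner_self_eq_norm_sq, inner_sub_left, inner_sub_right, inner_add_left,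
    inner_add_right, real_inner_smul_left, real_inner_smul_right, real_inner_comm a b,
    real_inner_comm a c, real_inner_comm b c]
  ring

theorem bdf2_energy_sub_le_two_mul_inner (a b c : H) :
    ‖a‖ ^ 2 + ‖(2 : ℝ) • a - b‖ ^ 2 - (‖b‖ ^ 2 + ‖(2 : ℝ) • b - c‖ ^ 2) ≤
      2 * ⟪(3 : ℝ) • a - (4 : ℝ) • b + c, a⟫ := by
  rw [two_mul_inner_bdf2_eq]
  exact le_add_of_nonneg_right (sq_nonneg _)

end BDF2

theorem bdf2_energy_sub_le_two_mul_real (a b c : ℝ) :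
    |a| ^ 2 + |2 * a - b| ^ 2 - (|b| ^ 2 + |2 * b - c| ^ 2) ≤ 2 * ((3 * a - 4 * b + c) * a) := by
  simpa only [Real.norm_eq_abs, smul_eq_mul, Real.inner_apply, mul_comm (3 * a - 4 * b + c)]
    using bdf2_energy_sub_le_two_mul_inner a b c

theorem sav_bdf2_energy_stability_general
    {H : Type*} [NormedAddCommGroup H] [InnerProductSpace ℝ H]
    (α ν η T Δt e : ℝ) (hα : 0 < α)
    (hΔt : 0 < Δt)
    (u2 u1 u0 b2 b1 b0 : H) (q2 q1 q0 : ℝ) (A B C Du Db : ℝ)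
    (hu : (1/(2*Δt)) * (inner ℝ ((3:ℝ) • u2 - (4:ℝ) • u1 + u0) u2 : ℝ) + ν * Du^2 =
      e * q2 * (α * B - A))
    (hb : (α/(2*Δt)) * (inner ℝ ((3:ℝ) • b2 - (4:ℝ) • b1 + b0) b2 : ℝ) + α * η * Db^2 =
      -(α * e * q2 * C))
    (hq : (3*q2 - 4*q1 + q0)/(2*Δt) = -(1/T) * q2 + e * (α * C - α * B + A)) :
    ((1:ℝ)/4 * (‖u2‖^2 + α * ‖b2‖^2 + |q2|^2) +
      (1:ℝ)/4 * (‖(2:ℝ) • u2 - u1‖^2 + α * ‖(2:ℝ) • b2 - b1‖^2 + |2*q2 - q1|^2)) -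
    ((1:ℝ)/4 * (‖u1‖^2 + α * ‖b1‖^2 + |q1|^2) +
      (1:ℝ)/4 * (‖(2:ℝ) • u1 - u0‖^2 + α * ‖(2:ℝ) • b1 - b0‖^2 + |2*q1 - q0|^2)) ≤
    -(Δt * (ν * Du^2 + η * α * Db^2 + (1/T) * |q2|^2)) := by
  have hΔt₂ : 2 * Δt ≠ 0 := by positivity
  have hpairing : ⟪(3 : ℝ) • u2 - (4 : ℝ) • u1 + u0, u2⟫ +
      α * ⟪(3 : ℝ) • b2 - (4 : ℝ) • b1 + b0, b2⟫ + (3 * q2 - 4 * q1 + q0) * q2 =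
      -(2 * Δt * (ν * Du ^ 2 + η * α * Db ^ 2 + (1 / T) * |q2| ^ 2)) := by
    rw [sq_abs]
    field_simp at hu hb hq
    linear_combination hu + α * hb + q2 * hq
  have hu_le := bdf2_energy_sub_le_two_mul_inner u2 u1 u0
  have hb_le := mul_le_mul_of_nonneg_left (bdf2_energy_sub_le_two_mul_inner b2 b1 b0) hα.le
  have hq_le := bdf2_energy_sub_le_two_mul_real q2 q1 q0
  linarith

theorem sav_bdf2_energy_stability
    {H : Type*} [NormedAddCommGroup H] [InnerProductSpace ℝ H]
    (α ν η T Δt e : ℝ) (hα : 0 < α) (hν : 0 < ν) (hη : 0 < η) (hT : 0 < T)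
    (hΔt : 0 < Δt) (he : 0 < e)
    (u2 u1 u0 b2 b1 b0 : H) (q2 q1 q0 : ℝ) (A B C Du Db : ℝ)
    (hDu : 0 ≤ Du) (hDb : 0 ≤ Db)
    (hu : (1/(2*Δt)) * (inner ℝ ((3:ℝ) • u2 - (4:ℝ) • u1 + u0) u2 : ℝ) + ν * Du^2 =
      e * q2 * (α * B - A))
    (hb : (α/(2*Δt)) * (inner ℝ ((3:ℝ) • b2 - (4:ℝ) • b1 + b0) b2 : ℝ) + α * η * Db^2 =
      -(α * e * q2 * C))
    (hq : (3*q2 - 4*q1 + q0)/(2*Δt) = -(1/T) * q2 + e * (α * C - α * B + A)) :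
    ((1:ℝ)/4 * (‖u2‖^2 + α * ‖b2‖^2 + |q2|^2) +
      (1:ℝ)/4 * (‖(2:ℝ) • u2 - u1‖^2 + α * ‖(2:ℝ) • b2 - b1‖^2 + |2*q2 - q1|^2)) -
    ((1:ℝ)/4 * (‖u1‖^2 + α * ‖b1‖^2 + |q1|^2) +
      (1:ℝ)/4 * (‖(2:ℝ) • u1 - u0‖^2 + α * ‖(2:ℝ) • b1 - b0‖^2 + |2*q1 - q0|^2)) ≤
    -(Δt * (ν * Du^2 + η * α * Db^2 + (1/T) * |q2|^2)) :=
  sav_bdf2_energy_stability_general α ν η T Δt e hα hΔt u2 u1 u0 b2 b1 b0 q2 q1 q0 A B C Du Db hu hb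
    hq
end
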